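/- arXiv:2303.11264 — 2 statements merged into one kernel-verified Lean document; each statement's English description precedes it below -/
import Mathlib

section
/- If x0 has at least one nonzero entry, then the dimension of the trajectory set Y(x0) = {y : ∃Φ, Z_{AB}Φ=[I;0], y = Φ_{Nx+1:,:}·x0}, viewed as an affine subspace, equals NuT. -/
/-!
`Z Â` is strictly block lower triangular, hence nilpotent, so `I - Z Â` is invertible and the
constraint `Z_{AB} Φ = [I; 0]` determines the state rows of `Φ` from its input rows `Φ_u`, which
are free. The trajectory is then `y₀ + G (Φ_u x₀)` with `G = tail2 [(I - Z Â)⁻¹ Z B̂; I]`, and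
because `x₀ ≠ 0` the vector `Φ_u x₀` ranges over all of `ℝ^{Nu T}`. The identity block makes `G`
injective, so the direction of `Y(x₀)` is `range G`, of dimension `Nu T`.
-/

open Matrix

/-- Moore–Penrose pseudoinverse conditions. -/
def IsMoorePenrose {m n : Type*} [Fintype m] [Fintype n]
    (M : Matrix m n ℝ) (Mp : Matrix n m ℝ) : Prop :=
  M * Mp * M = M ∧ Mp * M * Mp = Mp ∧ (M * Mp)ᵀ = M * Mp ∧ (Mp * M)ᵀ = Mp * M

/-- Block-downshift matrix: identity `Nx × Nx` blocks on the first block subdiagonal. -/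
def dshift (Nx T : ℕ) : Matrix (Fin (T+1) × Fin Nx) (Fin (T+1) × Fin Nx) ℝ :=
  Matrix.of fun p q => if p.1.val = q.1.val + 1 ∧ p.2 = q.2 then 1 else 0

/-- Block diagonal `Â = blkdiag(A, …, A)` with `T+1` copies. -/
def Ahat {Nx : ℕ} (A : Matrix (Fin Nx) (Fin Nx) ℝ) (T : ℕ) :
    Matrix (Fin (T+1) × Fin Nx) (Fin (T+1) × Fin Nx) ℝ :=
  Matrix.of fun p q => if p.1 = q.1 then A p.2 q.2 else 0

/-- Block diagonal `B̂ = blkdiag(B, …, B)` with `T` copies, embedded so that `Z * B̂`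
has the right dimensions `Nx(T+1) × NuT`. -/
def Bhat {Nx Nu : ℕ} (B : Matrix (Fin Nx) (Fin Nu) ℝ) (T : ℕ) :
    Matrix (Fin (T+1) × Fin Nx) (Fin T × Fin Nu) ℝ :=
  Matrix.of fun p q => if p.1.val = q.1.val then B p.2 q.2 else 0

/-- `Z_{AB} := [I - Z·Â, -Z·B̂]`. -/
def ZAB {Nx Nu : ℕ} (A : Matrix (Fin Nx) (Fin Nx) ℝ) (B : Matrix (Fin Nx) (Fin Nu) ℝ)
    (T : ℕ) : Matrix (Fin (T+1) × Fin Nx) ((Fin (T+1) × Fin Nx) ⊕ (Fin T × Fin Nu)) ℝ :=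
  Matrix.fromCols (1 - dshift Nx T * Ahat A T) (-(dshift Nx T * Bhat B T))

/-- The right-hand side `[I; 0]`: identity in the first `Nx` rows (block `t = 0`),
zeros below. -/
def rhsIO (Nx T : ℕ) : Matrix (Fin (T+1) × Fin Nx) (Fin Nx) ℝ :=
  Matrix.of fun p j => if p.1 = 0 ∧ p.2 = j then 1 else 0

/-- Remove the first `Nx` rows (the block `t = 0` of the state part) of a matrix whose
rows are indexed like the rows of `Φ`; state block `t` of the result corresponds to
block `t+1` of the input. -/
def tail2 {Nx Nu T : ℕ} {c : Type*}
    (M : Matrix ((Fin (T+1) × Fin Nx) ⊕ (Fin T × Fin Nu)) c ℝ) :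
    Matrix ((Fin T × Fin Nx) ⊕ (Fin T × Fin Nu)) c ℝ :=
  Matrix.of fun p j =>
    match p with
    | Sum.inl (t, i) => M (Sum.inl (t.succ, i)) j
    | Sum.inr q => M (Sum.inr q) j

/-- Trajectory set `𝒴(x0)`: trajectories `y = Φ_{Nx+1:,:} x0` over all `Φ` satisfying
the achievability constraint `Z_{AB} Φ = [I;0]`. -/
def trajSet {Nx Nu : ℕ} (A : Matrix (Fin Nx) (Fin Nx) ℝ)
    (B : Matrix (Fin Nx) (Fin Nu) ℝ) (T : ℕ) (x0 : Fin Nx → ℝ) :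
    Set ((Fin T × Fin Nx) ⊕ (Fin T × Fin Nu) → ℝ) :=
  {y | ∃ Φ : Matrix ((Fin (T+1) × Fin Nx) ⊕ (Fin T × Fin Nu)) (Fin Nx) ℝ,
        ZAB A B T * Φ = rhsIO Nx T ∧ y = tail2 Φ *ᵥ x0}

section DownshiftNilpotent

variable {Nx T : ℕ} (A : Matrix (Fin Nx) (Fin Nx) ℝ)

lemma dshift_mul_Ahat_apply_of_ne {p q : Fin (T+1) × Fin Nx} (h : p.1.val ≠ q.1.val + 1) :
    (dshift Nx T * Ahat A T) p q = 0 := by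
  refine Finset.sum_eq_zero fun r _ => ?_
  simp only [dshift, Ahat, of_apply]
  split_ifs with h1 h2 <;> simp_all

lemma dshift_mul_Ahat_pow_apply_of_ne (k : ℕ) {p q : Fin (T+1) × Fin Nx}
    (h : p.1.val ≠ q.1.val + k) : ((dshift Nx T * Ahat A T) ^ k) p q = 0 := by
  induction k generalizing p q with
  | zero => exact one_apply_ne fun hpq => h (by simp [hpq])
  | succ k ih =>
    rw [pow_succ, mul_apply]
    refine Finset.sum_eq_zero fun r _ => ?_
    by_cases hr : p.1.val = r.1.val + k
    · rw [dshift_mul_Ahat_apply_of_ne A (by omega), mul_zero]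
    · rw [ih hr, zero_mul]

lemma isNilpotent_dshift_mul_Ahat : IsNilpotent (dshift Nx T * Ahat A T) :=
  ⟨T + 1, ext fun p _ => dshift_mul_Ahat_pow_apply_of_ne A _ (by omega)⟩

lemma isUnit_one_sub_dshift_mul_Ahat : IsUnit (1 - dshift Nx T * Ahat A T) :=
  (isNilpotent_dshift_mul_Ahat A).isUnit_one_sub

end DownshiftNilpotent

section Tail

variable {Nx Nu T : ℕ} {c : Type*}

lemma tail2_add (M M' : Matrix ((Fin (T+1) × Fin Nx) ⊕ (Fin T × Fin Nu)) c ℝ) :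
    tail2 (M + M') = tail2 M + tail2 M' := by
  ext (_ | _) _ <;> rfl

lemma tail2_mul {r : Type*} [Fintype r]
    (M : Matrix ((Fin (T+1) × Fin Nx) ⊕ (Fin T × Fin Nu)) r ℝ) (C : Matrix r c ℝ) :
    tail2 (M * C) = tail2 M * C := by
  ext (_ | _) _ <;> rfl

lemma tail2_fromRows_one_mulVec_inr (X : Matrix (Fin (T+1) × Fin Nx) (Fin T × Fin Nu) ℝ)
    (u : Fin T × Fin Nu → ℝ) (q : Fin T × Fin Nu) :
    (tail2 (fromRows X 1) *ᵥ u) (Sum.inr q) = u q := by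
  change (fromRows X 1 *ᵥ u) (Sum.inr q) = u q
  simp [fromRows_mulVec]

end Tail

lemma exists_mulVec_eq_of_ne_zero {K m n : Type*} [Field K] [Fintype n] [DecidableEq n]
    {x : n → K} (hx : x ≠ 0) (u : m → K) : ∃ U : Matrix m n K, U *ᵥ x = u := by
  obtain ⟨i, hi⟩ := Function.ne_iff.mp hx
  refine ⟨vecMulVec u (Pi.single i (x i)⁻¹), ?_⟩
  rw [vecMulVec_mulVec, single_dotProduct, inv_mul_cancel₀ hi]
  simp

lemma vectorSpan_range_add_const {k V W : Type*} [Ring k] [AddCommGroup V] [Module k V]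
    [AddCommGroup W] [Module k W] (f : V →ₗ[k] W) (w : W) :
    vectorSpan k (Set.range fun v => f v + w) = LinearMap.range f := by
  have := (f.toAffineMap + AffineMap.const k V w).map_vectorSpan (s := Set.univ)
  rw [Set.image_univ, ← direction_affineSpan, AffineSubspace.span_univ,
    AffineSubspace.direction_top, Submodule.map_top] at this
  simp only [AffineMap.add_linear, LinearMap.toAffineMap_linear, AffineMap.const_linear,
    add_zero] at this
  exact this.symm

section Trajectories

variable {Nx Nu T : ℕ} (A : Matrix (Fin Nx) (Fin Nx) ℝ) (B : Matrix (Fin Nx) (Fin Nu) ℝ)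

noncomputable def achievableResponse (U : Matrix (Fin T × Fin Nu) (Fin Nx) ℝ) :
    Matrix ((Fin (T+1) × Fin Nx) ⊕ (Fin T × Fin Nu)) (Fin Nx) ℝ :=
  fromRows ((1 - dshift Nx T * Ahat A T)⁻¹ * (rhsIO Nx T + dshift Nx T * Bhat B T * U)) U

noncomputable def inputToTraj :
    Matrix ((Fin T × Fin Nx) ⊕ (Fin T × Fin Nu)) (Fin T × Fin Nu) ℝ :=
  tail2 (fromRows ((1 - dshift Nx T * Ahat A T)⁻¹ * (dshift Nx T * Bhat B T)) 1)

lemma toRows₂_achievableResponse (U : Matrix (Fin T × Fin Nu) (Fin Nx) ℝ) :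
    (achievableResponse A B U).toRows₂ = U :=
  toRows₂_fromRows _ _

lemma ZAB_mul_eq_rhsIO_iff (Φ : Matrix ((Fin (T+1) × Fin Nx) ⊕ (Fin T × Fin Nu)) (Fin Nx) ℝ) :
    ZAB A B T * Φ = rhsIO Nx T ↔ Φ = achievableResponse A B Φ.toRows₂ := by
  have := (isUnit_one_sub_dshift_mul_Ahat (T := T) A).invertible
  obtain ⟨X, U, rfl⟩ : ∃ X U, Φ = fromRows X U := ⟨_, _, (fromRows_toRows Φ).symm⟩
  rw [toRows₂_fromRows, achievableResponse, fromRows_inj.eq_iff, and_iff_left rfl, ZAB,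
    fromCols_mul_fromRows, Matrix.neg_mul, ← sub_eq_add_neg, sub_eq_iff_eq_add, eq_comm,
    ← inv_mul_eq_iff_eq_mul_of_invertible, eq_comm]

lemma achievableResponse_eq (U : Matrix (Fin T × Fin Nu) (Fin Nx) ℝ) :
    achievableResponse A B U = achievableResponse A B 0 +
      fromRows ((1 - dshift Nx T * Ahat A T)⁻¹ * (dshift Nx T * Bhat B T)) 1 * U := by
  rw [fromRows_mul, Matrix.one_mul]
  ext (_ | _) _ <;> simp [achievableResponse, Matrix.mul_add, Matrix.mul_assoc]

lemma tail2_achievableResponse_mulVec (U : Matrix (Fin T × Fin Nu) (Fin Nx) ℝ)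
    (x0 : Fin Nx → ℝ) :
    tail2 (achievableResponse A B U) *ᵥ x0 =
      inputToTraj A B *ᵥ (U *ᵥ x0) + tail2 (achievableResponse A B 0) *ᵥ x0 := by
  rw [achievableResponse_eq, tail2_add, tail2_mul, add_mulVec, ← mulVec_mulVec, add_comm]
  rfl

lemma trajSet_eq_range_add {x0 : Fin Nx → ℝ} (hx0 : x0 ≠ 0) :
    trajSet A B T x0 = Set.range fun u =>
      (inputToTraj A B).mulVecLin u + tail2 (achievableResponse A B 0) *ᵥ x0 := by
  ext y
  simp only [trajSet, ZAB_mul_eq_rhsIO_iff, mulVecLin_apply, Set.mem_ofPred_eq, Set.mem_range]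
  constructor
  · rintro ⟨Φ, hΦ, rfl⟩
    rw [hΦ, tail2_achievableResponse_mulVec _ _ Φ.toRows₂]
    exact ⟨_, rfl⟩
  · rintro ⟨u, rfl⟩
    obtain ⟨U, rfl⟩ := exists_mulVec_eq_of_ne_zero hx0 u
    exact ⟨achievableResponse A B U, by rw [toRows₂_achievableResponse],
      (tail2_achievableResponse_mulVec A B U x0).symm⟩

lemma mulVec_inputToTraj_injective : Function.Injective (inputToTraj (T := T) A B).mulVec :=
  fun u v huv => funext fun q => by
    simpa only [inputToTraj, tail2_fromRows_one_mulVec_inr] using congrFun huv (Sum.inr q)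

end Trajectories

/-- for `x0` with at least one nonzero entry, the trajectory set
`𝒴(x0)` is an affine set of dimension `NuT`. -/
theorem trajSet_dim {Nx Nu T : ℕ}
    (A : Matrix (Fin Nx) (Fin Nx) ℝ) (B : Matrix (Fin Nx) (Fin Nu) ℝ)
    (x0 : Fin Nx → ℝ) (hx0 : x0 ≠ 0) :
    Module.finrank ℝ (vectorSpan ℝ (trajSet A B T x0)) = Nu * T := by
  rw [trajSet_eq_range_add A B hx0, vectorSpan_range_add_const,
    LinearMap.finrank_range_of_inj (mulVec_inputToTraj_injective A B),
    Module.finrank_fintype_fun_eq_card, Fintype.card_prod, Fintype.card_fin, Fintype.card_fin,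
    mul_comm]
end

section
/- Locality-first characterization: assume there exists Φ satisfying Z_{AB}Φ=[I;0] and Φ ∈ L, and let 𝔐 be the support indices of vec(Φ) allowed nonzero by L. Then Y_L(x0) = {(X₂)_{:,𝔐} H†k + (X₂)_{:,𝔐}(I - H†H)γ : γ free}, where X₂ := X_{Nx+1:,:}, H := (Z_{AB}^{blk})_{:,𝔐}, k := vec([I;0]); and dim(Y_L(x0)) = rank((X₂)_{:,𝔐}(I - H†H)). -/
open Matrix

/-- Column-wise vectorization: `vec(M) (j, i) = M i j`. -/
def vecc {r c : Type*} (M : Matrix r c ℝ) : c × r → ℝ := fun q => M q.2 q.1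

/-- Block-diagonal augmentation `M^blk := blkdiag(M, …, M)`, one copy of `M` per
element of the column-index type `c`, so that `vec(M Λ) = M^blk vec(Λ)`. -/
def blkaug (c : Type*) [DecidableEq c] {r r' : Type*} (M : Matrix r r' ℝ) :
    Matrix (c × r) (c × r') ℝ :=
  Matrix.of fun q p => if q.1 = p.1 then M q.2 p.2 else 0

/-- Augmented state matrix `X(x0) := [(x0)_1 I, …, (x0)_{Nx} I]` (identity blocks of
size `r`), satisfying `Λ x0 = X(x0) vec(Λ)`. -/
def augX {Nx : ℕ} (r : Type*) [DecidableEq r] (x0 : Fin Nx → ℝ) :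
    Matrix r (Fin Nx × r) ℝ :=
  Matrix.of fun i q => if i = q.2 then x0 q.1 else 0

/-!
Vectorizing `Φ` makes the achievability constraint and the trajectory map linear in `vec(Φ)`:
`vec(Z_{AB} Φ) = Z_{AB}^{blk} vec(Φ)` and `Φ₂ x0 = X₂ vec(Φ)`. Under the locality constraint
`vec(Φ)` is an arbitrary vector `z` supported on `𝔐`, so the localized trajectory set is the image
under `(X₂)_{:,𝔐}` of the solution set of `H z = k`. As `H H† H = H` and this system is consistent,
its solutions are exactly `H†k + (I - H†H)γ`; the trajectory set is therefore a translate of the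
range of `(X₂)_{:,𝔐}(I - H†H)`, whose dimension is the rank of that matrix.
-/

section Vectorization

variable {r c : Type*}

lemma vecc_injective : Function.Injective (vecc : Matrix r c ℝ → c × r → ℝ) :=
  fun _ _ h => Matrix.ext fun i j => congrFun h (j, i)

lemma blkaug_mulVec_vecc [Fintype c] [DecidableEq c] {r' : Type*} [Fintype r']
    (M : Matrix r r' ℝ) (Φ : Matrix r' c ℝ) :
    blkaug c M *ᵥ vecc Φ = vecc (M * Φ) := by
  funext p
  simp only [mulVec, dotProduct, blkaug, vecc, of_apply, mul_apply, Fintype.sum_prod_type]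
  simp [ite_mul]

lemma augX_mulVec_vecc {n : ℕ} [Fintype r] [DecidableEq r] (x0 : Fin n → ℝ)
    (Λ : Matrix r (Fin n) ℝ) :
    augX r x0 *ᵥ vecc Λ = Λ *ᵥ x0 := by
  funext i
  simp only [mulVec, dotProduct, augX, vecc, of_apply, Fintype.sum_prod_type]
  simp [mul_comm]

lemma exists_vecc_restrict_eq (S : Finset (c × r)) (z : S → ℝ) :
    ∃ Φ : Matrix r c ℝ, (∀ p ∉ S, vecc Φ p = 0) ∧ (fun m : S => vecc Φ m.1) = z := by
  classical
  exact ⟨of fun i j => if h : (j, i) ∈ S then z ⟨(j, i), h⟩ else 0,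
    fun _ hp => dif_neg hp, funext fun m => dif_pos m.2⟩

end Vectorization

lemma of_subtype_val_mulVec {ρ ι : Type*} [Fintype ι] (G : Matrix ρ ι ℝ) (S : Finset ι)
    {v : ι → ℝ} (hv : ∀ p ∉ S, v p = 0) :
    (of fun i (m : S) => G i m.1) *ᵥ (fun m : S => v m.1) = G *ᵥ v := by
  funext i
  simp only [mulVec, dotProduct, of_apply]
  rw [Finset.sum_coe_sort S (fun q => G i q * v q)]
  exact Finset.sum_subset (Finset.subset_univ S) fun q _ hq => by simp [hv q hq]

lemma tail2_mulVec_apply {Nx Nu T : ℕ} {c : Type*} [Fintype c]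
    (M : Matrix ((Fin (T+1) × Fin Nx) ⊕ (Fin T × Fin Nu)) c ℝ) (v : c → ℝ)
    (p : (Fin T × Fin Nx) ⊕ (Fin T × Fin Nu)) :
    (tail2 M *ᵥ v) p = (M *ᵥ v) (Sum.map (Prod.map Fin.succ id) id p) := by
  rcases p with ⟨t, i⟩ | q <;> rfl

lemma tail2_augX_mulVec_vecc {Nx Nu T : ℕ} (x0 : Fin Nx → ℝ)
    (Φ : Matrix ((Fin (T+1) × Fin Nx) ⊕ (Fin T × Fin Nu)) (Fin Nx) ℝ) :
    tail2 (augX ((Fin (T+1) × Fin Nx) ⊕ (Fin T × Fin Nu)) x0) *ᵥ vecc Φ = tail2 Φ *ᵥ x0 := by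
  funext p
  rw [tail2_mulVec_apply, tail2_mulVec_apply, augX_mulVec_vecc]

lemma blkaug_restrict_mulVec_vecc {r r' c : Type*} [Fintype r'] [Fintype c] [DecidableEq c]
    (M : Matrix r r' ℝ) (S : Finset (c × r')) {Φ : Matrix r' c ℝ}
    (hΦ : ∀ p ∉ S, vecc Φ p = 0) :
    (of fun p (m : S) => blkaug c M p m.1) *ᵥ (fun m : S => vecc Φ m.1) = vecc (M * Φ) := by
  rw [of_subtype_val_mulVec _ _ hΦ, blkaug_mulVec_vecc]

lemma setOf_supported_solutions_eq {r r' c ρ : Type*} [Fintype r'] [Fintype c] [DecidableEq c]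
    (G : Matrix r r' ℝ) (R : Matrix r c ℝ) (X : Matrix ρ (c × r') ℝ) (S : Finset (c × r')) :
    {y | ∃ Φ : Matrix r' c ℝ, G * Φ = R ∧ (∀ p ∉ S, vecc Φ p = 0) ∧ y = X *ᵥ vecc Φ} =
      {y | ∃ z : S → ℝ, (of fun p (m : S) => blkaug c G p m.1) *ᵥ z = vecc R ∧
        y = (of fun i (m : S) => X i m.1) *ᵥ z} := by
  ext y
  constructor
  · rintro ⟨Φ, hG, hΦ, rfl⟩
    exact ⟨_, by rw [blkaug_restrict_mulVec_vecc _ _ hΦ, hG], (of_subtype_val_mulVec _ _ hΦ).symm⟩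
  · rintro ⟨z, hz, rfl⟩
    obtain ⟨Φ, hΦ, rfl⟩ := exists_vecc_restrict_eq S z
    refine ⟨Φ, vecc_injective ?_, hΦ, of_subtype_val_mulVec _ _ hΦ⟩
    rw [← blkaug_restrict_mulVec_vecc _ _ hΦ, hz]

lemma setOf_supported_tail2_mulVec_eq {Nx Nu T : ℕ} {r : Type*}
    (G : Matrix r ((Fin (T+1) × Fin Nx) ⊕ (Fin T × Fin Nu)) ℝ) (R : Matrix r (Fin Nx) ℝ)
    (x0 : Fin Nx → ℝ) (S : Finset (Fin Nx × ((Fin (T+1) × Fin Nx) ⊕ (Fin T × Fin Nu)))) :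
    {y | ∃ Φ, G * Φ = R ∧ (∀ p ∉ S, vecc Φ p = 0) ∧ y = tail2 Φ *ᵥ x0} =
      {y | ∃ z : S → ℝ, (of fun p (m : S) => blkaug (Fin Nx) G p m.1) *ᵥ z = vecc R ∧
        y = (of fun i (m : S) =>
          tail2 (augX ((Fin (T+1) × Fin Nx) ⊕ (Fin T × Fin Nu)) x0) i m.1) *ᵥ z} := by
  simp only [← tail2_augX_mulVec_vecc x0]
  exact setOf_supported_solutions_eq _ _ _ _

section GeneralizedInverse

variable {R m n : Type*} [Ring R] [Fintype m] [Fintype n] [DecidableEq n]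
  {H : Matrix m n R} {G : Matrix n m R} {k : m → R}

lemma mulVec_eq_iff_exists_of_mul_mul_self (hG : H * G * H = H) (hk : ∃ z₀, H *ᵥ z₀ = k)
    (z : n → R) : H *ᵥ z = k ↔ ∃ γ, z = G *ᵥ k + (1 - G * H) *ᵥ γ := by
  obtain ⟨z₀, rfl⟩ := hk
  constructor
  · intro hz
    refine ⟨z, ?_⟩
    rw [sub_mulVec, one_mulVec, ← mulVec_mulVec, hz]
    abel
  · rintro ⟨γ, rfl⟩
    have hkill : H * (1 - G * H) = 0 := by
      rw [Matrix.mul_sub, Matrix.mul_one, ← Matrix.mul_assoc, hG, sub_self]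
    rw [mulVec_add, mulVec_mulVec, mulVec_mulVec, mulVec_mulVec, hkill, zero_mulVec, add_zero, hG]

lemma image_setOf_mulVec_eq_of_mul_mul_self {ρ : Type*} (X : Matrix ρ n R)
    (hG : H * G * H = H) (hk : ∃ z₀, H *ᵥ z₀ = k) :
    {y | ∃ z, H *ᵥ z = k ∧ y = X *ᵥ z} =
      {y | ∃ γ, y = X *ᵥ (G *ᵥ k) + (X * (1 - G * H)) *ᵥ γ} := by
  ext y
  simp only [Set.mem_ofPred_eq, mulVec_eq_iff_exists_of_mul_mul_self hG hk]
  constructor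
  · rintro ⟨z, ⟨γ, rfl⟩, rfl⟩
    exact ⟨γ, by simp only [mulVec_add, mulVec_mulVec]⟩
  · rintro ⟨γ, rfl⟩
    exact ⟨_, ⟨γ, rfl⟩, by simp only [mulVec_add, mulVec_mulVec]⟩

end GeneralizedInverse

lemma vectorSpan_setOf_add_apply {K V W : Type*} [Ring K] [AddCommGroup V] [Module K V]
    [AddCommGroup W] [Module K W] (c : W) (f : V →ₗ[K] W) :
    vectorSpan K {y | ∃ v, y = c + f v} = LinearMap.range f := by
  have hc : c ∈ {y | ∃ v, y = c + f v} := ⟨0, by simp⟩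
  rw [vectorSpan_eq_span_vsub_set_right K hc]
  convert Submodule.span_eq (LinearMap.range f)
  ext w
  simp [vsub_eq_sub, eq_comm]

lemma finrank_vectorSpan_setOf_add_mulVec {K ρ ι : Type*} [Field K] [Fintype ι]
    (c : ρ → K) (M : Matrix ρ ι K) :
    Module.finrank K (vectorSpan K {y | ∃ γ, y = c + M *ᵥ γ}) = M.rank :=
  congrArg (fun S : Submodule K (ρ → K) => Module.finrank K S)
    (vectorSpan_setOf_add_apply c M.mulVecLin)

/-- locality-first localized trajectory set: with support indices `𝔐`
of `vec(Φ)`, `H := (Z_{AB}^blk)_{:,𝔐}`, `k := vec([I;0])`, and `X₂ := X_{Nx+1:,:}`,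
if some `Φ` satisfies both the dynamics and locality constraints, then
`𝒴_L(x0) = {(X₂)_{:,𝔐} H†k + (X₂)_{:,𝔐}(I - H†H)γ : γ free}` and
`dim 𝒴_L(x0) = rank((X₂)_{:,𝔐}(I - H†H))`. -/
theorem localized_trajSet_locality_first {Nx Nu T : ℕ}
    (A : Matrix (Fin Nx) (Fin Nx) ℝ) (B : Matrix (Fin Nx) (Fin Nu) ℝ)
    (x0 : Fin Nx → ℝ)
    (𝔐 : Finset (Fin Nx × ((Fin (T+1) × Fin Nx) ⊕ (Fin T × Fin Nu))))
    -- H := (Z_{AB}^blk)_{:,𝔐} and k := vec([I;0])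
    (H : Matrix (Fin Nx × (Fin (T+1) × Fin Nx)) ↥𝔐 ℝ)
    (hH : H = Matrix.of fun p m => blkaug (Fin Nx) (ZAB A B T) p m.1)
    (k : Fin Nx × (Fin (T+1) × Fin Nx) → ℝ) (hk : k = vecc (rhsIO Nx T))
    -- X₂ restricted to the columns 𝔐
    (X2M : Matrix ((Fin T × Fin Nx) ⊕ (Fin T × Fin Nu)) ↥𝔐 ℝ)
    (hX2M : X2M = Matrix.of fun r m =>
      tail2 (augX ((Fin (T+1) × Fin Nx) ⊕ (Fin T × Fin Nu)) x0) r m.1)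
    (Hdag : Matrix ↥𝔐 (Fin Nx × (Fin (T+1) × Fin Nx)) ℝ)
    (hMPH : IsMoorePenrose H Hdag)
    (hfeas : ∃ Φ : Matrix ((Fin (T+1) × Fin Nx) ⊕ (Fin T × Fin Nu)) (Fin Nx) ℝ,
      ZAB A B T * Φ = rhsIO Nx T ∧ ∀ p, p ∉ 𝔐 → vecc Φ p = 0) :
    {y | ∃ Φ : Matrix ((Fin (T+1) × Fin Nx) ⊕ (Fin T × Fin Nu)) (Fin Nx) ℝ,
        ZAB A B T * Φ = rhsIO Nx T ∧ (∀ p, p ∉ 𝔐 → vecc Φ p = 0) ∧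
        y = tail2 Φ *ᵥ x0} =
      {y | ∃ γ : ↥𝔐 → ℝ,
        y = X2M *ᵥ (Hdag *ᵥ k) + (X2M * (1 - Hdag * H)) *ᵥ γ} ∧
    Module.finrank ℝ (vectorSpan ℝ
        {y | ∃ Φ : Matrix ((Fin (T+1) × Fin Nx) ⊕ (Fin T × Fin Nu)) (Fin Nx) ℝ,
          ZAB A B T * Φ = rhsIO Nx T ∧ (∀ p, p ∉ 𝔐 → vecc Φ p = 0) ∧
          y = tail2 Φ *ᵥ x0}) =
      (X2M * (1 - Hdag * H)).rank := by
  subst hH hk hX2M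
  obtain ⟨Φ₀, hΦ₀, hsupp₀⟩ := hfeas
  rw [setOf_supported_tail2_mulVec_eq, image_setOf_mulVec_eq_of_mul_mul_self _ hMPH.1
    ⟨_, by rw [blkaug_restrict_mulVec_vecc _ _ hsupp₀, hΦ₀]⟩]
  exact ⟨rfl, finrank_vectorSpan_setOf_add_mulVec _ _⟩
end
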